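/- arXiv:1805.04648 — 2 statements merged into one kernel-verified Lean document; each statement's English description precedes it below -/
import Mathlib

section
/- For every permutation π of {1,…,m} there exists a p×p signed permutation matrix R such that for every design measure w, M(πw) = Rᵀ M(w) R, where πw is the design measure assigning weight w(a) to the treatment πa = π_{a_1}…π_{a_m} for each a ∈ A. -/
open Matrix Finset

namespace OofA

/-- The index set `S` of pairs `(i,j)` with `i < j`. -/
abbrev Pairs (m : ℕ) := {ij : Fin m × Fin m // ij.1 < ij.2}

/-- `z_{ij}(a)`: for a treatment `a` (a permutation, `a k` being the component placed at
position `k`), this equals `c h` where `h` is the distance between the positions of the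
components `i` and `j` in `a`, with sign `+` if `i` precedes `j` and `-` otherwise. -/
noncomputable def z {m : ℕ} (c : ℕ → ℝ) (a : Equiv.Perm (Fin m)) (ij : Pairs m) : ℝ :=
  if (a.symm ij.1.1 : ℕ) < (a.symm ij.1.2 : ℕ) then
    c (Nat.dist (a.symm ij.1.1 : ℕ) (a.symm ij.1.2 : ℕ))
  else
    -c (Nat.dist (a.symm ij.1.1 : ℕ) (a.symm ij.1.2 : ℕ))

/-- The vector `x(a) = (1, z(a)ᵀ)ᵀ ∈ ℝ^p`, indexed by `Unit ⊕ Pairs m`. -/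
noncomputable def x {m : ℕ} (c : ℕ → ℝ) (a : Equiv.Perm (Fin m)) : (Unit ⊕ Pairs m) → ℝ :=
  Sum.elim (fun _ => (1 : ℝ)) (z c a)

/-- The moment matrix `M(w) = Σ_a w(a) x(a) x(a)ᵀ` of a design measure `w`. -/
noncomputable def momentMatrix {m : ℕ} (c : ℕ → ℝ) (w : Equiv.Perm (Fin m) → ℝ) :
    Matrix (Unit ⊕ Pairs m) (Unit ⊕ Pairs m) ℝ :=
  ∑ a : Equiv.Perm (Fin m), w a • Matrix.vecMulVec (x c a) (x c a)

/-- The moment matrix `M₀` of the uniform design measure `w₀(a) = 1/m!`. -/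
noncomputable def M0 (m : ℕ) (c : ℕ → ℝ) : Matrix (Unit ⊕ Pairs m) (Unit ⊕ Pairs m) ℝ :=
  momentMatrix c (fun _ => 1 / (Nat.factorial m : ℝ))

/-- A signed permutation matrix: exactly one nonzero entry in each row and in each column,
each nonzero entry being `1` or `-1`. -/
def IsSignedPerm {n : Type*} [Fintype n] (R : Matrix n n ℝ) : Prop :=
  (∀ i, ∃! j, R i j ≠ 0) ∧ (∀ j, ∃! i, R i j ≠ 0) ∧
    (∀ i j, R i j ≠ 0 → R i j = 1 ∨ R i j = -1)

/-- `b₀ = (2/(m(m−1))) Σ_{h=1}^{m−1} (m−h) c_h²`. -/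
noncomputable def b0 (m : ℕ) (c : ℕ → ℝ) : ℝ :=
  (2 / ((m : ℝ) * ((m : ℝ) - 1))) *
    ∑ h ∈ Finset.Icc 1 (m - 1), ((m : ℝ) - (h : ℝ)) * (c h) ^ 2

/-- `b₁ = (2/(m(m−1)(m−2))) Σ (m−h₁−h₂) c_{h₁} (2c_{h₁+h₂} − c_{h₂})`,
summed over `h₁, h₂ ≥ 1` with `h₁ + h₂ ≤ m − 1`. -/
noncomputable def b1 (m : ℕ) (c : ℕ → ℝ) : ℝ :=
  (2 / ((m : ℝ) * ((m : ℝ) - 1) * ((m : ℝ) - 2))) *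
    ∑ h1 ∈ Finset.Icc 1 (m - 1), ∑ h2 ∈ Finset.Icc 1 (m - 1 - h1),
      ((m : ℝ) - (h1 : ℝ) - (h2 : ℝ)) * c h1 * (2 * c (h1 + h2) - c h2)

/-- The `q × q` matrix `V` of (7). -/
noncomputable def V (m : ℕ) : Matrix (Pairs m) (Pairs m) ℝ := fun ij kl =>
  if (ij.1.1 = kl.1.1 ∧ ij.1.2 ≠ kl.1.2) ∨ (ij.1.1 ≠ kl.1.1 ∧ ij.1.2 = kl.1.2) then 1
  else if ij.1.1 = kl.1.2 ∨ ij.1.2 = kl.1.1 then -1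
  else 0

section Aux

variable {m : ℕ}

/-- Sort a pair of distinct elements into an element of `Pairs m`. -/
def sortPair (i j : Fin m) (h : i ≠ j) : Pairs m :=
  if hij : i < j then ⟨(i, j), hij⟩ else ⟨(j, i), h.lt_or_gt.resolve_left hij⟩

/-- The induced map of a permutation on unordered pairs. -/
def pmap (π : Equiv.Perm (Fin m)) (ij : Pairs m) : Pairs m :=
  sortPair (π ij.1.1) (π ij.1.2) (fun h => absurd (π.injective h) (ne_of_lt ij.2))

lemma pmap_pmap (π : Equiv.Perm (Fin m)) (ij : Pairs m) :
    pmap π⁻¹ (pmap π ij) = ij := by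
  obtain ⟨⟨i, j⟩, hij⟩ := ij
  by_cases h : π i < π j
  · simp only [pmap, sortPair, dif_pos h]
    simp [Equiv.Perm.inv_def, Equiv.symm_apply_apply, hij]
  · simp only [pmap, sortPair, dif_neg h]
    simp only [Equiv.Perm.inv_def, Equiv.symm_apply_apply]
    rw [dif_neg (asymm hij)]

/-- The sign attached to a pair by a permutation. -/
noncomputable def sgn (π : Equiv.Perm (Fin m)) (ij : Pairs m) : ℝ :=
  if π ij.1.1 < π ij.1.2 then 1 else -1

lemma sgn_ne_zero (π : Equiv.Perm (Fin m)) (ij : Pairs m) : sgn π ij ≠ 0 := by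
  unfold sgn; split <;> norm_num

/-- The signed permutation matrix associated with `π`. -/
noncomputable def Rmat (π : Equiv.Perm (Fin m)) :
    Matrix (Unit ⊕ Pairs m) (Unit ⊕ Pairs m) ℝ :=
  fun u v =>
    match u, v with
    | Sum.inl _, Sum.inl _ => 1
    | Sum.inl _, Sum.inr _ => 0
    | Sum.inr _, Sum.inl _ => 0
    | Sum.inr kl, Sum.inr ij => if kl = pmap π⁻¹ ij then sgn π⁻¹ ij else 0

lemma Rmat_isSignedPerm (π : Equiv.Perm (Fin m)) : IsSignedPerm (Rmat π) := by
  refine ⟨?_, ?_, ?_⟩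
  · rintro (u | kl)
    · refine ⟨Sum.inl (), by simp [Rmat], ?_⟩
      rintro (v | ij) h
      · rfl
      · simp [Rmat] at h
    · refine ⟨Sum.inr (pmap π kl), ?_, ?_⟩
      · have : kl = pmap π⁻¹ (pmap π kl) := (pmap_pmap π kl).symm
        simp [Rmat, ← this, sgn_ne_zero]
      · rintro (v | ij) h
        · simp [Rmat] at h
        · simp only [Rmat] at h
          split at h
          · rename_i heq
            have := pmap_pmap π⁻¹ ij
            rw [inv_inv] at this
            rw [heq, this]
          · exact absurd rfl h
  · rintro (u | ij)
    · refine ⟨Sum.inl (), by simp [Rmat], ?_⟩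
      rintro (v | kl) h
      · rfl
      · simp [Rmat] at h
    · refine ⟨Sum.inr (pmap π⁻¹ ij), ?_, ?_⟩
      · simp [Rmat, sgn_ne_zero]
      · rintro (v | kl) h
        · simp [Rmat] at h
        · simp only [Rmat] at h
          split at h
          · rename_i heq; rw [heq]
          · exact absurd rfl h
  · rintro (u | kl) (v | ij) h
    · left; rfl
    · simp [Rmat] at h
    · simp [Rmat] at h
    · simp only [Rmat] at h ⊢
      split at h
      · rename_i heq
        rw [if_pos heq]
        unfold sgn; split
        · left; rfl
        · right; rfl
      · exact absurd rfl h

lemma z_mul (c : ℕ → ℝ) (π a : Equiv.Perm (Fin m)) (ij : Pairs m) :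
    z c (π * a) ij = sgn π⁻¹ ij * z c a (pmap π⁻¹ ij) := by
  obtain ⟨⟨i, j⟩, hij⟩ := ij
  have hsymm : ∀ k, (π * a).symm k = a.symm (π⁻¹ k) := fun k => rfl
  have hne : (a.symm (π⁻¹ i) : ℕ) ≠ (a.symm (π⁻¹ j) : ℕ) := by
    intro h
    exact absurd (π⁻¹.injective (a.symm.injective (Fin.val_injective h)))
      (ne_of_lt hij)
  by_cases h : π⁻¹ i < π⁻¹ j
  · simp only [pmap, sortPair, sgn]
    rw [dif_pos h, if_pos h, one_mul]
    simp only [z, hsymm]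
  · simp only [pmap, sortPair, sgn]
    rw [dif_neg h, if_neg h]
    simp only [z, hsymm]
    rcases lt_or_gt_of_ne hne with h2 | h2
    · rw [if_pos h2, if_neg (by omega : ¬ (a.symm (π⁻¹ j) : ℕ) < (a.symm (π⁻¹ i) : ℕ))]
      rw [Nat.dist_comm]; ring
    · rw [if_neg (by omega : ¬ (a.symm (π⁻¹ i) : ℕ) < (a.symm (π⁻¹ j) : ℕ)), if_pos h2]
      rw [Nat.dist_comm]; ring

lemma x_vecMul (c : ℕ → ℝ) (π a : Equiv.Perm (Fin m)) :
    x c (π * a) = (x c a) ᵥ* (Rmat π) := by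
  funext u
  cases u with
  | inl u =>
    simp [x, vecMul, dotProduct, Rmat, Fintype.sum_sum_type]
  | inr ij =>
    simp only [x, Sum.elim_inr, vecMul, dotProduct, Fintype.sum_sum_type,
      Finset.univ_unique, Finset.sum_singleton, Sum.elim_inl, Rmat, mul_zero, one_mul,
      zero_add]
    rw [z_mul c π a ij]
    simp [mul_ite, Finset.sum_ite_eq', mul_comm]

lemma conj_vecMulVec {n : Type*} [Fintype n] (R : Matrix n n ℝ) (v : n → ℝ) :
    Rᵀ * vecMulVec v v * R = vecMulVec (v ᵥ* R) (v ᵥ* R) := by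
  ext a b
  simp only [Matrix.mul_apply, vecMulVec_apply, vecMul, dotProduct, transpose_apply,
    Finset.sum_mul]
  simp only [Finset.mul_sum]
  rw [Finset.sum_comm]
  exact Finset.sum_congr rfl fun i _ => Finset.sum_congr rfl fun j _ => by ring

end Aux

/-- For every permutation `π` of the components there is a signed permutation matrix `R`
with `M(πw) = Rᵀ M(w) R` for every design measure `w`, where the design measure `πw`
assigns weight `w(a)` to the treatment `πa = π * a`, i.e. `(πw)(b) = w(π⁻¹ b)`. -/
theorem statement4 {m : ℕ} (hm : 3 ≤ m) (c : ℕ → ℝ) (hc1 : c 1 = 1)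
    (hmono : ∀ h : ℕ, 1 ≤ h → h + 1 ≤ m - 1 → c (h + 1) ≤ c h)
    (hlast : 0 ≤ c (m - 1)) (π : Equiv.Perm (Fin m)) :
    ∃ R : Matrix (Unit ⊕ Pairs m) (Unit ⊕ Pairs m) ℝ, IsSignedPerm R ∧
      ∀ w : Equiv.Perm (Fin m) → ℝ, (∀ a, 0 ≤ w a) →
        (∑ a : Equiv.Perm (Fin m), w a = 1) →
          momentMatrix c (fun b => w (π⁻¹ * b)) = Rᵀ * momentMatrix c w * R := by
  refine ⟨Rmat π, Rmat_isSignedPerm π, ?_⟩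
  intro w _ _
  have h1 : momentMatrix c (fun b => w (π⁻¹ * b)) =
      ∑ a : Equiv.Perm (Fin m), w a • vecMulVec (x c (π * a)) (x c (π * a)) := by
    rw [momentMatrix, ← Equiv.sum_comp (Equiv.mulLeft π)]
    simp [inv_mul_cancel_left]
  rw [h1, momentMatrix, Matrix.mul_sum, Matrix.sum_mul]
  refine Finset.sum_congr rfl fun a _ => ?_
  rw [Matrix.mul_smul, Matrix.smul_mul, conj_vecMulVec, ← x_vecMul]
end OofA
end

section
/- The characteristic polynomial of V equals (X − (m−2))^{m−1} · (X + 2)^{(m−1)(m−2)/2}; equivalently, V has eigenvalues m−2 and −2 with multiplicities m−1 and (m−1)(m−2)/2 respectively. (Lemma A.3(b).) -/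
open Matrix Finset

namespace OofA

noncomputable def NN (m : ℕ) : Matrix (Pairs m) (Fin m) ℝ := fun p k =>
  (if p.1.1 = k then (1:ℝ) else 0) - (if p.1.2 = k then 1 else 0)

lemma sum_ind (m : ℕ) (a b : Fin m) :
    ∑ k : Fin m, (if a = k then (1:ℝ) else 0) * (if b = k then 1 else 0)
      = if a = b then 1 else 0 := by
  simp [ite_mul, Finset.sum_ite_eq]

lemma mulNt {m : ℕ} (p r : Pairs m) : (NN m * (NN m)ᵀ) p r =
    (if p.1.1 = r.1.1 then (1:ℝ) else 0) - (if p.1.1 = r.1.2 then 1 else 0)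
    - (if p.1.2 = r.1.1 then 1 else 0) + (if p.1.2 = r.1.2 then 1 else 0) := by
  simp only [Matrix.mul_apply, Matrix.transpose_apply, NN, sub_mul, mul_sub,
    Finset.sum_sub_distrib, sum_ind]
  ring

lemma V_eq {m : ℕ} : V m = NN m * (NN m)ᵀ - (2:ℝ) • 1 := by
  ext p r
  obtain ⟨⟨i, j⟩, hij⟩ := p
  obtain ⟨⟨k, l⟩, hkl⟩ := r
  simp only [V, Matrix.sub_apply, Matrix.smul_apply, Matrix.one_apply, mulNt,
    Subtype.mk.injEq, Prod.mk.injEq, smul_eq_mul]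
  replace hij : (i:ℕ) < (j:ℕ) := hij
  replace hkl : (k:ℕ) < (l:ℕ) := hkl
  have e1 : ¬ k = l := by simp only [Fin.ext_iff]; omega
  have e2 : ¬ l = k := by simp only [Fin.ext_iff]; omega
  have e3 : ¬ i = j := by simp only [Fin.ext_iff]; omega
  have e4 : ¬ j = i := by simp only [Fin.ext_iff]; omega
  by_cases h1 : i = k <;> by_cases h2 : i = l <;> by_cases h3 : j = k <;> by_cases h4 : j = l <;>
    first
      | (exfalso; simp only [Fin.ext_iff] at h1 h2 h3 h4; omega)
      | (simp [h1, h2, h3, h4, e1, e2, e3, e4]; try norm_num)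

lemma NtN {m : ℕ} (a b : Fin m) :
    ((NN m)ᵀ * NN m) a b = (if a = b then (m:ℝ) else 0) - 1 := by
  classical
  set g : Fin m × Fin m → ℝ := fun x =>
    ((if x.1 = a then (1:ℝ) else 0) - if x.2 = a then 1 else 0) *
    ((if x.1 = b then (1:ℝ) else 0) - if x.2 = b then 1 else 0) with hg
  have hsub := Finset.sum_subtype (p := fun x : Fin m × Fin m => x.1 < x.2) (F := inferInstanceAs (Fintype (Pairs m)))
    (univ.filter (fun x : Fin m × Fin m => x.1 < x.2)) (by simp) g
  have key : ((NN m)ᵀ * NN m) a b = ∑ x ∈ univ.filter (fun x : Fin m × Fin m => x.1 < x.2), g x := by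
    rw [Matrix.mul_apply, hsub]
    rfl
  have hdiag : ∑ x ∈ univ.filter (fun x : Fin m × Fin m => x.1 = x.2), g x = 0 := by
    apply Finset.sum_eq_zero
    intro x hx
    simp only [Finset.mem_filter] at hx
    simp [hg, hx.2]
  have hswap : ∑ x ∈ univ.filter (fun x : Fin m × Fin m => x.2 < x.1), g x
      = ∑ x ∈ univ.filter (fun x : Fin m × Fin m => x.1 < x.2), g x := by
    apply Finset.sum_equiv (Equiv.prodComm (Fin m) (Fin m))
    · intro x; simp
    · intro x _; simp [hg]; ring
  have htot : ∑ x : Fin m × Fin m, g x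
      = 2 * ((if a = b then (m:ℝ) else 0) - 1) := by
    rw [Fintype.sum_prod_type]
    simp only [hg, sub_mul, mul_sub, Finset.sum_sub_distrib, ite_mul, one_mul, zero_mul,
      Finset.sum_ite_eq', Finset.mem_univ, if_true]
    by_cases h : a = b <;> simp [h, Finset.sum_ite_eq', Finset.sum_sub_distrib,
      Finset.card_univ] <;> ring
  have hsplit : ∑ x : Fin m × Fin m, g x
      = ∑ x ∈ univ.filter (fun x : Fin m × Fin m => x.1 < x.2), g x
        + (∑ x ∈ univ.filter (fun x : Fin m × Fin m => x.2 < x.1), g x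
          + ∑ x ∈ univ.filter (fun x : Fin m × Fin m => x.1 = x.2), g x) := by
    rw [← Finset.sum_filter_add_sum_filter_not univ (fun x : Fin m × Fin m => x.1 < x.2) g]
    congr 1
    rw [← Finset.sum_filter_add_sum_filter_not
      (univ.filter (fun x : Fin m × Fin m => ¬ x.1 < x.2)) (fun x => x.2 < x.1) g]
    congr 1
    · rw [Finset.filter_filter]
      apply Finset.sum_congr _ (fun _ _ => rfl)
      apply Finset.filter_congr
      intro x _
      constructor
      · exact fun h => h.2
      · exact fun h => ⟨not_lt.mpr h.le, h⟩
    · rw [Finset.filter_filter]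
      apply Finset.sum_congr _ (fun _ _ => rfl)
      apply Finset.filter_congr
      intro x _
      constructor
      · exact fun h => le_antisymm (not_lt.mp h.2) (not_lt.mp h.1)
      · exact fun h => ⟨not_lt.mpr h.ge, not_lt.mpr h.le⟩
  rw [key]
  rw [hswap, hdiag] at hsplit
  rw [htot] at hsplit
  linarith

lemma card_pairs (m : ℕ) : 2 * Fintype.card (Pairs m) = m * m - m := by
  classical
  have hcard : Fintype.card (Pairs m)
      = (univ.filter (fun x : Fin m × Fin m => x.1 < x.2)).card := by
    rw [Fintype.card_subtype]
  have hswap : (univ.filter (fun x : Fin m × Fin m => x.2 < x.1)).card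
      = (univ.filter (fun x : Fin m × Fin m => x.1 < x.2)).card := by
    apply Finset.card_bij' (fun x _ => (x.2, x.1)) (fun x _ => (x.2, x.1))
    all_goals intro x hx
    all_goals simp only [Finset.mem_filter, Finset.mem_univ, true_and] at *
    all_goals first | exact hx | rfl
  have hdiag : (univ.filter (fun x : Fin m × Fin m => x.1 = x.2)).card
      = (univ : Finset (Fin m)).card := by
    refine Finset.card_bij' (fun x _ => x.1) (fun i _ => (i, i)) ?_ ?_ ?_ ?_
    · intro x hx; simp
    · intro i _; simp
    · intro x hx
      simp only [Finset.mem_filter, Finset.mem_univ, true_and] at hx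
      exact Prod.ext rfl hx
    · intro i _; rfl
  have hsplit : (univ.filter (fun x : Fin m × Fin m => x.1 < x.2)).card
        + ((univ.filter (fun x : Fin m × Fin m => x.2 < x.1)).card
          + (univ.filter (fun x : Fin m × Fin m => x.1 = x.2)).card)
      = (univ : Finset (Fin m × Fin m)).card := by
    rw [← Finset.card_filter_add_card_filter_not
      (s := (univ : Finset (Fin m × Fin m))) (p := fun x => x.1 < x.2)]
    congr 1
    rw [← Finset.card_filter_add_card_filter_not
      (s := univ.filter (fun x : Fin m × Fin m => ¬ x.1 < x.2)) (p := fun x => x.2 < x.1)]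
    congr 1
    · rw [Finset.filter_filter]
      congr 1
      apply Finset.filter_congr
      intro x _
      simp only [Fin.lt_def, Fin.ext_iff]
      omega
    · rw [Finset.filter_filter]
      congr 1
      apply Finset.filter_congr
      intro x _
      simp only [Fin.lt_def, Fin.ext_iff]
      omega
  have huniv : (univ : Finset (Fin m × Fin m)).card = m * m := by
    simp [Finset.card_univ]
  have hFin : (univ : Finset (Fin m)).card = m := by simp
  rw [hcard]
  omega

lemma card_pairs' {m : ℕ} (hm : 3 ≤ m) :
    Fintype.card (Pairs m) = (m - 1) * (m - 2) / 2 + (m - 1) := by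
  have h1 := card_pairs m
  have heven : 2 ∣ (m - 1) * (m - 2) := by
    have h := Nat.even_mul_succ_self (m - 2)
    rw [show m - 2 + 1 = m - 1 by omega, mul_comm] at h
    exact h.two_dvd
  have h2e : 2 * ((m - 1) * (m - 2) / 2) = (m - 1) * (m - 2) := Nat.mul_div_cancel' heven
  obtain ⟨n, rfl⟩ : ∃ n, m = n + 3 := ⟨m - 3, by omega⟩
  have e1 : n + 3 - 1 = n + 2 := by omega
  have e2 : n + 3 - 2 = n + 1 := by omega
  rw [e1, e2] at h2e ⊢
  have hA : (n + 3) * (n + 3) = n * n + 6 * n + 9 := by rw [Nat.mul_add, Nat.add_mul]; ring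
  have hB : (n + 2) * (n + 1) = n * n + 3 * n + 2 := by ring
  rw [hA] at h1
  rw [hB] at h2e ⊢
  generalize n * n = k at h1 h2e ⊢
  omega

lemma det_aux {m : ℕ} (hm : 3 ≤ m) (t : ℝ) (hc : t + 2 ≠ 0) (hd : t + 2 - m ≠ 0) :
    ((t • (1 : Matrix (Pairs m) (Pairs m) ℝ)) - V m).det
      = (t - ((m:ℝ) - 2)) ^ (m - 1) * (t + 2) ^ ((m - 1) * (m - 2) / 2) := by
  classical
  set c : ℝ := t + 2 with hc'
  set d : ℝ := c - m with hd'
  have hdne : d ≠ 0 := hd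
  -- step 1
  have hV : (t • (1 : Matrix (Pairs m) (Pairs m) ℝ)) - V m
      = c • ((1 : Matrix (Pairs m) (Pairs m) ℝ) + ((-(c⁻¹)) • NN m) * (NN m)ᵀ) := by
    rw [V_eq, Matrix.smul_mul, smul_add, smul_smul]
    rw [show c * (-(c⁻¹)) = -1 by field_simp]
    module
  rw [hV, det_smul, det_one_add_mul_comm]
  have hcr1 : ∀ a b : Fin m,
      (Matrix.replicateCol Unit (fun _ => (1:ℝ)) * Matrix.replicateRow Unit (fun _ => (1:ℝ))) a b = 1 := by
    intro a b; simp [Matrix.mul_apply]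
  have hcr2 : ∀ a b : Fin m,
      (Matrix.replicateCol Unit (fun _ => d⁻¹) * Matrix.replicateRow Unit (fun _ => (1:ℝ))) a b = d⁻¹ := by
    intro a b; simp [Matrix.mul_apply]
  have hmid : (1 : Matrix (Fin m) (Fin m) ℝ) + (NN m)ᵀ * ((-(c⁻¹)) • NN m)
      = c⁻¹ • (d • (1 : Matrix (Fin m) (Fin m) ℝ)
          + Matrix.replicateCol Unit (fun _ => (1:ℝ)) * Matrix.replicateRow Unit (fun _ => (1:ℝ))) := by
    rw [Matrix.mul_smul]
    ext a b
    simp only [Matrix.add_apply, Matrix.smul_apply, NtN, hcr1, Matrix.one_apply, smul_eq_mul]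
    by_cases h : a = b <;> simp [h] <;> field_simp <;> ring
  rw [hmid, det_smul]
  -- step 3
  have hcol : d • (1 : Matrix (Fin m) (Fin m) ℝ)
        + Matrix.replicateCol Unit (fun _ => (1:ℝ)) * Matrix.replicateRow Unit (fun _ => (1:ℝ))
      = d • ((1 : Matrix (Fin m) (Fin m) ℝ)
        + Matrix.replicateCol Unit (fun _ => d⁻¹) * Matrix.replicateRow Unit (fun _ => (1:ℝ))) := by
    ext a b
    simp only [Matrix.add_apply, Matrix.smul_apply, Matrix.one_apply, hcr1, hcr2, smul_eq_mul]
    by_cases h : a = b <;> simp [h] <;> field_simp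
  rw [hcol, det_smul, det_one_add_replicateCol_mul_replicateRow]
  have hdot : (fun _ : Fin m => (1:ℝ)) ⬝ᵥ (fun _ => d⁻¹) = m * d⁻¹ := by
    simp [dotProduct, Finset.card_univ]
  rw [hdot]
  -- step 4 : collect powers
  have hq : Fintype.card (Pairs m) = (m - 1) * (m - 2) / 2 + (m - 1) := card_pairs' hm
  rw [Fintype.card_fin, hq, pow_add]
  have hgoal : t - ((m:ℝ) - 2) = d := by rw [hd', hc']; ring
  rw [hgoal]
  have hm1 : c ^ (m - 1) * (c⁻¹) ^ m * (d ^ m * (1 + (m:ℝ) * d⁻¹)) = d ^ (m - 1) := by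
    have hmm : (m : ℕ) = (m - 1) + 1 := by omega
    have h1 : (1 : ℝ) + (m:ℝ) * d⁻¹ = c * d⁻¹ := by
      field_simp
      simp only [hd']
      ring
    rw [h1, hmm, pow_succ c⁻¹, pow_succ d]
    field_simp
    rw [Nat.add_sub_cancel, one_div, ← mul_pow, mul_inv_cancel₀ hc, one_pow, one_mul]
  calc c ^ ((m-1) * (m-2) / 2) * c ^ (m - 1) * ((c⁻¹) ^ m * (d ^ m * (1 + (m:ℝ) * d⁻¹)))
      = (c ^ (m-1) * (c⁻¹) ^ m * (d ^ m * (1 + (m:ℝ) * d⁻¹))) * c ^ ((m-1) * (m-2) / 2) := by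
        ring
    _ = d ^ (m - 1) * c ^ ((m - 1) * (m - 2) / 2) := by rw [hm1]

lemma eval_charpoly {n : Type*} [Fintype n] [DecidableEq n] (M : Matrix n n ℝ) (t : ℝ) :
    M.charpoly.eval t = ((t • (1 : Matrix n n ℝ)) - M).det := by
  rw [Matrix.charpoly, ← Polynomial.coe_evalRingHom, RingHom.map_det]
  congr 1
  ext i j
  by_cases h : i = j <;>
    simp [h, charmatrix_apply_eq, charmatrix_apply_ne, Matrix.one_apply, Matrix.sub_apply,
      Matrix.smul_apply]


open Polynomial in
/-- Lemma A.3(b): the characteristic polynomial of `V` equals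
`(X − (m−2))^{m−1} (X + 2)^{(m−1)(m−2)/2}`. -/
theorem statement10 {m : ℕ} (hm : 3 ≤ m) :
    (V m).charpoly =
      (X - C ((m : ℝ) - 2)) ^ (m - 1) * (X + C 2) ^ ((m - 1) * (m - 2) / 2) := by
  apply Polynomial.eq_of_infinite_eval_eq
  apply Set.Infinite.mono (s := ({-2, (m:ℝ) - 2} : Set ℝ)ᶜ)
  · intro t ht
    simp only [Set.mem_compl_iff, Set.mem_insert_iff, Set.mem_singleton_iff, not_or] at ht
    obtain ⟨ht1, ht2⟩ := ht
    have hc : t + 2 ≠ 0 := by intro h; apply ht1; linarith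
    have hd : t + 2 - (m:ℝ) ≠ 0 := by intro h; apply ht2; linarith
    show _ = _
    rw [eval_charpoly, det_aux hm t hc hd]
    simp [Polynomial.eval_pow, Polynomial.eval_mul]
  · exact Set.Finite.infinite_compl (Set.toFinite _)
end OofA
end
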